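/- For each base station n, let O_n > 0 be the fraction of time-frequency resources allocated to each served user and T_n > 0 the target rate, and define the rate coverage R_c(Δ, Ψ) = P(∃ n ∈ ℕ, O_n · log₂(1 + SIR_n) > T_n) (with log₂(1 + SIR_n) = ∞ when the interference is zero and the direct signal positive). Consider two parameter choices (Δ_n, Ψ_n)_{n∈ℕ} and (Δ'_n, Ψ'_n)_{n∈ℕ} using the same locations x_n, powers P_n, resource fractions O_n and target rates T_n. If Δ_n ≥ Δ'_n and Ψ_n ≤ Ψ'_n for every n ∈ ℕ, then R_c(Δ, Ψ) ≥ R_c(Δ', Ψ'). -/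

import Mathlib

open MeasureTheory ProbabilityTheory ENNReal

/-- Interference at the typical user from all base stations except `n`, valued in `[0,∞]`. -/
noncomputable def interference {Ω : Type*} (P : ℕ → ℝ) (x : ℕ → EuclideanSpace ℝ (Fin 2))
    (α : ℝ) (g : ℕ → Ω → ℝ) (n : ℕ) (ω : Ω) : ℝ≥0∞ :=
  ∑' m : ℕ, if m = n then 0 else ENNReal.ofReal (P m * g m ω * ‖x m‖ ^ (-α))

/-- SIR of base station `n` at the typical user, valued in `[0,∞]`
(it equals `0` when the interference is infinite). -/
noncomputable def SIR {Ω : Type*} (P : ℕ → ℝ) (x : ℕ → EuclideanSpace ℝ (Fin 2))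
    (α : ℝ) (h g : ℕ → Ω → ℝ) (n : ℕ) (ω : Ω) : ℝ≥0∞ :=
  ENNReal.ofReal (P n * h n ω * ‖x n‖ ^ (-α)) / interference P x α g n ω

/-- Rate delivered by base station `n`: `O n · log₂(1 + SIR_n)`, valued in `[0,∞]`;
it is `∞` exactly when the SIR is `∞` (zero interference and positive direct signal). -/
noncomputable def rate {Ω : Type*} (P : ℕ → ℝ) (x : ℕ → EuclideanSpace ℝ (Fin 2))
    (α : ℝ) (O : ℕ → ℝ) (h g : ℕ → Ω → ℝ) (n : ℕ) (ω : Ω) : ℝ≥0∞ :=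
  if SIR P x α h g n ω = ∞ then ∞
  else ENNReal.ofReal (O n * Real.logb 2 (1 + (SIR P x α h g n ω).toReal))

/-! Realise every fading variable as the quantile transform `F⁻¹(U)` of its own uniform variable
`U`, with the same independent uniforms for both parameter choices. The cdf of `Gamma(k, r)`
decreases in the integer shape `k` (the difference of consecutive ones is
`(r x)^k e^(-r x) / k!`), so in this coupling `h' n ≤ h n` and `g m ≤ g' m` pointwise. The SIR
grows with the direct fading and falls with the interfering fadings, and the rate grows with
the SIR, so the coverage event for `(Δ', Ψ')` is contained in the one for `(Δ, Ψ)`. By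
independence the coverage probability only depends on the product of the marginal laws, which
is the law of the coupled vector. -/

open Set Filter Topology Nat

attribute [local instance] Measure.Subtype.measureSpace

namespace ProbabilityTheory

/-- Defined on `(0, 1)` only: for `u ≤ 0` or `u ≥ 1` the set below may be unbounded or empty. -/
noncomputable def quantile (ν : Measure ℝ) (u : Ioo (0 : ℝ) 1) : ℝ :=
  sInf {x | (u : ℝ) ≤ cdf ν x}

section Quantile

variable (ν : Measure ℝ)

theorem quantile_le_iff (u : Ioo (0 : ℝ) 1) (x : ℝ) :
    quantile ν u ≤ x ↔ (u : ℝ) ≤ cdf ν x := by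
  set S := {x | (u : ℝ) ≤ cdf ν x}
  obtain ⟨b, hb⟩ := eventually_atBot.1 ((tendsto_cdf_atBot ν).eventually (gt_mem_nhds u.2.1))
  have hbdd : BddBelow S := ⟨b, fun s hs => not_lt.1 fun hsb => (hb s hsb.le).not_ge hs⟩
  have hne : S.Nonempty :=
    ((tendsto_cdf_atTop ν).eventually (lt_mem_nhds u.2.2)).exists.imp fun _ h => h.le
  have hmem : sInf S ∈ S := by
    -- the infimum is attained because the cdf is right continuous
    refine ge_of_tendsto ((cdf ν).right_continuous _ |>.mono Ioi_subset_Ici_self)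
      (eventually_nhdsWithin_of_forall fun y hy => ?_)
    obtain ⟨s, hs, hsy⟩ := (csInf_lt_iff hbdd hne).1 hy
    exact hs.trans (monotone_cdf ν hsy.le)
  exact ⟨fun h => hmem.trans (monotone_cdf ν h), fun h => csInf_le hbdd h⟩

theorem monotone_quantile : Monotone (quantile ν) := fun u v huv =>
  (quantile_le_iff ν u _).2 ((show (u : ℝ) ≤ v from huv).trans ((quantile_le_iff ν v _).1 le_rfl))

theorem quantile_le_quantile {ν' : Measure ℝ} (h : ∀ x, cdf ν x ≤ cdf ν' x)
    (u : Ioo (0 : ℝ) 1) : quantile ν' u ≤ quantile ν u :=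
  (quantile_le_iff ν' u _).2 (((quantile_le_iff ν u _).1 le_rfl).trans (h _))

instance : IsProbabilityMeasure (volume : Measure (Ioo (0 : ℝ) 1)) :=
  ⟨by rw [Measure.Subtype.volume_univ measurableSet_Ioo.nullMeasurableSet]; simp⟩

theorem map_quantile_volume [IsProbabilityMeasure ν] :
    (volume : Measure (Ioo (0 : ℝ) 1)).map (quantile ν) = ν := by
  have hm : Measurable (quantile ν) := (monotone_quantile ν).measurable
  refine Measure.ext_of_Iic _ _ fun x => ?_
  rw [Measure.map_apply hm measurableSet_Iic, ← ofReal_cdf]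
  have hpre : quantile ν ⁻¹' Iic x = Subtype.val ⁻¹' Iic (cdf ν x) := by
    ext u; simp [quantile_le_iff]
  rw [hpre, Measure.Subtype.volume_def, Measure.comap_apply _ Subtype.val_injective
    (fun s hs => measurableSet_Ioo.subtype_image hs) _ (measurableSet_Iic.preimage
    measurable_subtype_coe), Subtype.image_preimage_coe]
  refine le_antisymm ((measure_mono fun t (ht : t ∈ Ioo (0 : ℝ) 1 ∩ Iic (cdf ν x)) =>
    show t ∈ Icc 0 (cdf ν x) from ⟨ht.1.1.le, ht.2⟩).trans_eq (by simp)) ?_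
  calc ENNReal.ofReal (cdf ν x) = volume (Ioo 0 (cdf ν x)) := by simp
    _ ≤ _ := measure_mono fun t (ht : t ∈ Ioo 0 (cdf ν x)) =>
      show t ∈ Ioo (0 : ℝ) 1 ∩ Iic (cdf ν x) from
        ⟨⟨ht.1, ht.2.trans_le (cdf_le_one ν x)⟩, ht.2.le⟩

end Quantile

theorem iIndepFun.measure_preimage_eq_infinitePi_quantile {ι Ω : Type*} [MeasurableSpace Ω]
    {μ : Measure Ω} [IsProbabilityMeasure μ] {X : ι → Ω → ℝ} (hX : ∀ i, Measurable (X i))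
    (hind : iIndepFun X μ) {ν : ι → Measure ℝ} (hν : ∀ i, μ.map (X i) = ν i)
    {E : Set (ι → ℝ)} (hE : MeasurableSet E) :
    μ ((fun ω i => X i ω) ⁻¹' E) =
      Measure.infinitePi (fun _ => volume) ((fun u i => quantile (ν i) (u i)) ⁻¹' E) := by
  have : ∀ i, IsProbabilityMeasure (ν i) := fun i =>
    hν i ▸ Measure.isProbabilityMeasure_map (hX i).aemeasurable
  have hQ : ∀ i, Measurable (quantile (ν i)) := fun i => (monotone_quantile (ν i)).measurable
  rw [← Measure.map_apply (measurable_pi_lambda _ hX) hE, hind.map_fun_eq_infinitePi_map hX,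
    ← Measure.map_apply (by fun_prop) hE,
    Measure.infinitePi_map_pi (fun _ => (volume : Measure (Ioo (0 : ℝ) 1))) hQ]
  simp only [hν, map_quantile_volume]

theorem hasDerivAt_pow_mul_exp_neg_div_factorial (k : ℕ) (y : ℝ) :
    HasDerivAt (fun y => y ^ (k + 1) * Real.exp (-y) / (k + 1)!)
      ((y ^ k * Real.exp (-y) / k !) - y ^ (k + 1) * Real.exp (-y) / (k + 1)!) y := by
  refine (((hasDerivAt_pow (k + 1) y).mul (hasDerivAt_neg y).exp).div_const _).congr_deriv ?_
  push_cast [factorial_succ]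
  field_simp
  ring

theorem gammaMeasure_natCast_succ_Iic (k : ℕ) {r x : ℝ} (hr : 0 < r) (hx : 0 ≤ x) :
    gammaMeasure (k + 1 : ℕ) r (Iic x) =
      ENNReal.ofReal (∫ y in 0..x, (r * y) ^ k * Real.exp (-(r * y)) / k ! * r) := by
  have hcont : Continuous fun y : ℝ => (r * y) ^ k * Real.exp (-(r * y)) / k ! * r := by fun_prop
  rw [gammaMeasure, withDensity_apply _ measurableSet_Iic,
    lintegral_Iic_eq_lintegral_Iio_add_Icc _ hx, lintegral_gammaPDF_of_nonpos le_rfl, zero_add,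
    intervalIntegral.integral_of_le hx, ← integral_Icc_eq_integral_Ioc,
    ofReal_integral_eq_lintegral_ofReal (hcont.integrableOn_Icc)
      (ae_restrict_of_forall_mem measurableSet_Icc fun y hy => by have := hy.1; positivity)]
  refine setLIntegral_congr_fun measurableSet_Icc fun y hy => ?_
  rw [gammaPDF_of_nonneg hy.1]
  push_cast
  rw [add_sub_cancel_right, Real.rpow_natCast, Real.Gamma_nat_eq_factorial, ← Nat.cast_add_one,
    Real.rpow_natCast]
  congr 1
  ring

theorem gammaMeasure_natCast_succ_succ_Iic_le (k : ℕ) {r : ℝ} (hr : 0 < r) (x : ℝ) :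
    gammaMeasure (k + 1 + 1 : ℕ) r (Iic x) ≤ gammaMeasure (k + 1 : ℕ) r (Iic x) := by
  rcases lt_or_ge x 0 with hx | hx
  · calc _ ≤ gammaMeasure (k + 1 + 1 : ℕ) r (Iic 0) := measure_mono (Iic_subset_Iic.2 hx.le)
      _ = 0 := by rw [gammaMeasure_natCast_succ_Iic (k + 1) hr le_rfl]; simp
      _ ≤ _ := bot_le
  rw [gammaMeasure_natCast_succ_Iic (k + 1) hr hx, gammaMeasure_natCast_succ_Iic k hr hx]
  refine ENNReal.ofReal_le_ofReal (sub_nonneg.1 ?_)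
  have hF (y : ℝ) := (hasDerivAt_pow_mul_exp_neg_div_factorial k (r * y)).comp y
    ((hasDerivAt_id y).const_mul r)
  rw [← intervalIntegral.integral_sub ((by fun_prop : Continuous _).intervalIntegrable _ _)
    ((by fun_prop : Continuous _).intervalIntegrable _ _),
    intervalIntegral.integral_eq_sub_of_hasDerivAt
      (fun y _ => (hF y).congr_deriv (by ring))
      ((by fun_prop : Continuous _).intervalIntegrable _ _)]
  simp only [Function.comp_apply, mul_zero, ne_eq, add_eq_zero, one_ne_zero, and_false,
    not_false_eq_true, zero_pow, zero_mul, zero_div, sub_zero]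
  positivity

theorem cdf_gammaMeasure_le_of_le {k K : ℕ} (hk : 0 < k) (hkK : k ≤ K) {r : ℝ} (hr : 0 < r)
    (x : ℝ) : cdf (gammaMeasure K r) x ≤ cdf (gammaMeasure k r) x := by
  have hprob {j : ℕ} (hj : 0 < j) : IsProbabilityMeasure (gammaMeasure j r) :=
    isProbabilityMeasure_gammaMeasure (by exact_mod_cast hj) hr
  have := hprob hk; have := hprob (hk.trans_le hkK)
  rw [← ENNReal.ofReal_le_ofReal_iff (cdf_nonneg _ _), ofReal_cdf, ofReal_cdf]
  induction K, hkK using Nat.le_induction with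
  | base => exact le_rfl
  | succ K hkK ih =>
    obtain ⟨j, rfl⟩ := exists_add_one_eq.2 (hk.trans_le hkK)
    exact (gammaMeasure_natCast_succ_succ_Iic_le j hr x).trans (ih (hprob (succ_pos j)))

end ProbabilityTheory

noncomputable def shannonRate (o : ℝ) (s : ℝ≥0∞) : ℝ≥0∞ :=
  if s = ∞ then ∞ else ENNReal.ofReal (o * Real.logb 2 (1 + s.toReal))

theorem monotone_shannonRate {o : ℝ} (ho : 0 ≤ o) : Monotone (shannonRate o) := by
  intro s t hst
  by_cases ht : t = ∞
  · simp [shannonRate, ht]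
  have hs : s ≠ ∞ := ne_top_of_le_ne_top ht hst
  simp only [shannonRate, if_neg hs, if_neg ht]
  gcongr
  norm_num

section Monotonicity

variable {Ω Ω' : Type*} {P : ℕ → ℝ} (x : ℕ → EuclideanSpace ℝ (Fin 2)) (α : ℝ)

theorem rate_eq_shannonRate (O : ℕ → ℝ) (h g : ℕ → Ω → ℝ) (n : ℕ) (ω : Ω) :
    rate P x α O h g n ω = shannonRate (O n) (SIR P x α h g n ω) :=
  rfl

theorem interference_le_interference (hP : ∀ m, 0 ≤ P m) {g : ℕ → Ω → ℝ} {g' : ℕ → Ω' → ℝ}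
    {ω : Ω} {ω' : Ω'} (hg : ∀ m, g m ω ≤ g' m ω') (n : ℕ) :
    interference P x α g n ω ≤ interference P x α g' n ω' := by
  refine ENNReal.tsum_le_tsum fun m => ?_
  split_ifs
  · exact le_rfl
  · have := hP m
    gcongr
    exact hg m

theorem SIR_le_SIR (hP : ∀ m, 0 ≤ P m) {h g : ℕ → Ω → ℝ} {h' g' : ℕ → Ω' → ℝ} {n : ℕ}
    {ω : Ω} {ω' : Ω'} (hh : h n ω ≤ h' n ω') (hg : ∀ m, g' m ω' ≤ g m ω) :
    SIR P x α h g n ω ≤ SIR P x α h' g' n ω' := by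
  have := hP n
  refine ENNReal.div_le_div ?_ (interference_le_interference x α hP hg n)
  gcongr

theorem rate_le_rate (hP : ∀ m, 0 ≤ P m) {O : ℕ → ℝ} {h g : ℕ → Ω → ℝ} {h' g' : ℕ → Ω' → ℝ}
    {n : ℕ} (hO : 0 ≤ O n) {ω : Ω} {ω' : Ω'} (hh : h n ω ≤ h' n ω')
    (hg : ∀ m, g' m ω' ≤ g m ω) :
    rate P x α O h g n ω ≤ rate P x α O h' g' n ω' := by
  rw [rate_eq_shannonRate, rate_eq_shannonRate]
  exact monotone_shannonRate hO (SIR_le_SIR x α hP hh hg)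

end Monotonicity

section Measurability

variable {Ω : Type*} [MeasurableSpace Ω] (P : ℕ → ℝ) (x : ℕ → EuclideanSpace ℝ (Fin 2)) (α : ℝ)
  {h g : ℕ → Ω → ℝ}

theorem measurable_interference (hg : ∀ m, Measurable (g m)) (n : ℕ) :
    Measurable (interference P x α g n) :=
  Measurable.tsum fun m => by
    have := hg m
    split_ifs <;> fun_prop

theorem measurable_SIR (hh : ∀ n, Measurable (h n)) (hg : ∀ m, Measurable (g m)) (n : ℕ) :
    Measurable (SIR P x α h g n) := by
  have := hh n
  have := measurable_interference P x α hg n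
  unfold SIR
  fun_prop

theorem measurable_rate (O : ℕ → ℝ) (hh : ∀ n, Measurable (h n)) (hg : ∀ m, Measurable (g m))
    (n : ℕ) : Measurable (rate P x α O h g n) := by
  have hS := measurable_SIR P x α hh hg n
  unfold rate
  refine Measurable.ite (measurableSet_eq_fun hS measurable_const) measurable_const ?_
  unfold Real.logb
  fun_prop

end Measurability

/-- Coordinate `inl n` of a configuration is the direct fading of station `n`, coordinate
`inr m` the interfering fading of station `m`. -/
noncomputable def coverageSet (P : ℕ → ℝ) (x : ℕ → EuclideanSpace ℝ (Fin 2)) (α : ℝ)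
    (O T : ℕ → ℝ) : Set (ℕ ⊕ ℕ → ℝ) :=
  {z | ∃ n, ENNReal.ofReal (T n) <
    rate P x α O (fun n z => z (.inl n)) (fun m z => z (.inr m)) n z}

theorem setOf_exists_lt_rate_eq_preimage_coverageSet {Ω : Type*} (P : ℕ → ℝ)
    (x : ℕ → EuclideanSpace ℝ (Fin 2)) (α : ℝ) (O T : ℕ → ℝ) (h g : ℕ → Ω → ℝ) :
    {ω | ∃ n, ENNReal.ofReal (T n) < rate P x α O h g n ω} =
      (fun ω i => Sum.elim h g i ω) ⁻¹' coverageSet P x α O T :=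
  rfl

theorem measurableSet_coverageSet (P : ℕ → ℝ) (x : ℕ → EuclideanSpace ℝ (Fin 2)) (α : ℝ)
    (O T : ℕ → ℝ) : MeasurableSet (coverageSet P x α O T) := by
  simp only [coverageSet, ofPred_exists]
  exact .iUnion fun n => measurableSet_lt measurable_const
    (measurable_rate P x α O (fun n => measurable_pi_apply _) (fun m => measurable_pi_apply _) n)

theorem rate_coverage_ordering_general
    (α : ℝ)
    (x : ℕ → EuclideanSpace ℝ (Fin 2))
    (P : ℕ → ℝ) (hP : ∀ n, 0 < P n)
    (O : ℕ → ℝ) (hO : ∀ n, 0 < O n)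
    (T : ℕ → ℝ)
    (Δ Ψ Δ' Ψ' : ℕ → ℕ)
    (hΨpos : ∀ n, 0 < Ψ n)
    (hΔ'pos : ∀ n, 0 < Δ' n)
    (hΔ : ∀ n, Δ' n ≤ Δ n) (hΨ : ∀ n, Ψ n ≤ Ψ' n)
    {Ω : Type*} [MeasurableSpace Ω] (μ : Measure Ω) [IsProbabilityMeasure μ]
    {Ω' : Type*} [MeasurableSpace Ω'] (μ' : Measure Ω') [IsProbabilityMeasure μ']
    (h g : ℕ → Ω → ℝ) (h' g' : ℕ → Ω' → ℝ)
    (hhm : ∀ n, Measurable (h n)) (hgm : ∀ n, Measurable (g n))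
    (hh'm : ∀ n, Measurable (h' n)) (hg'm : ∀ n, Measurable (g' n))
    (hindep : iIndepFun (Sum.elim h g) μ)
    (hindep' : iIndepFun (Sum.elim h' g') μ')
    (hhd : ∀ n, Measure.map (h n) μ = gammaMeasure (Δ n) 1)
    (hgd : ∀ n, Measure.map (g n) μ = gammaMeasure (Ψ n) 1)
    (hh'd : ∀ n, Measure.map (h' n) μ' = gammaMeasure (Δ' n) 1)
    (hg'd : ∀ n, Measure.map (g' n) μ' = gammaMeasure (Ψ' n) 1) :
    μ' {ω | ∃ n : ℕ, ENNReal.ofReal (T n) < rate P x α O h' g' n ω} ≤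
      μ {ω | ∃ n : ℕ, ENNReal.ofReal (T n) < rate P x α O h g n ω} := by
  rw [setOf_exists_lt_rate_eq_preimage_coverageSet, setOf_exists_lt_rate_eq_preimage_coverageSet,
    hindep.measure_preimage_eq_infinitePi_quantile (Sum.forall.2 ⟨hhm, hgm⟩)
      (ν := Sum.elim (fun n => gammaMeasure (Δ n) 1) fun m => gammaMeasure (Ψ m) 1)
      (Sum.forall.2 ⟨hhd, hgd⟩) (measurableSet_coverageSet P x α O T),
    hindep'.measure_preimage_eq_infinitePi_quantile (Sum.forall.2 ⟨hh'm, hg'm⟩)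
      (ν := Sum.elim (fun n => gammaMeasure (Δ' n) 1) fun m => gammaMeasure (Ψ' m) 1)
      (Sum.forall.2 ⟨hh'd, hg'd⟩) (measurableSet_coverageSet P x α O T)]
  refine measure_mono fun u ⟨n, hn⟩ =>
    ⟨n, hn.trans_le (rate_le_rate x α (fun m => (hP m).le) (hO n).le ?_ fun m => ?_)⟩
  · exact quantile_le_quantile _ (cdf_gammaMeasure_le_of_le (hΔ'pos n) (hΔ n) one_pos) _
  · exact quantile_le_quantile _ (cdf_gammaMeasure_le_of_le (hΨpos m) (hΨ m) one_pos) _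

/-- Rate-coverage ordering: larger direct-link shapes `Δ` and smaller interfering shapes `Ψ`
give a larger rate coverage. -/
theorem rate_coverage_ordering
    (α : ℝ) (hα : 2 < α)
    (x : ℕ → EuclideanSpace ℝ (Fin 2)) (hx : ∀ n, x n ≠ 0)
    (P : ℕ → ℝ) (hP : ∀ n, 0 < P n)
    (O : ℕ → ℝ) (hO : ∀ n, 0 < O n)
    (T : ℕ → ℝ) (hT : ∀ n, 0 < T n)
    (Δ Ψ Δ' Ψ' : ℕ → ℕ)
    (hΔpos : ∀ n, 0 < Δ n) (hΨpos : ∀ n, 0 < Ψ n)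
    (hΔ'pos : ∀ n, 0 < Δ' n) (hΨ'pos : ∀ n, 0 < Ψ' n)
    (hΔ : ∀ n, Δ' n ≤ Δ n) (hΨ : ∀ n, Ψ n ≤ Ψ' n)
    {Ω : Type*} [MeasurableSpace Ω] (μ : Measure Ω) [IsProbabilityMeasure μ]
    {Ω' : Type*} [MeasurableSpace Ω'] (μ' : Measure Ω') [IsProbabilityMeasure μ']
    (h g : ℕ → Ω → ℝ) (h' g' : ℕ → Ω' → ℝ)
    (hhm : ∀ n, Measurable (h n)) (hgm : ∀ n, Measurable (g n))
    (hh'm : ∀ n, Measurable (h' n)) (hg'm : ∀ n, Measurable (g' n))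
    (hindep : iIndepFun (Sum.elim h g) μ)
    (hindep' : iIndepFun (Sum.elim h' g') μ')
    (hhd : ∀ n, Measure.map (h n) μ = gammaMeasure (Δ n) 1)
    (hgd : ∀ n, Measure.map (g n) μ = gammaMeasure (Ψ n) 1)
    (hh'd : ∀ n, Measure.map (h' n) μ' = gammaMeasure (Δ' n) 1)
    (hg'd : ∀ n, Measure.map (g' n) μ' = gammaMeasure (Ψ' n) 1) :
    μ' {ω | ∃ n : ℕ, ENNReal.ofReal (T n) < rate P x α O h' g' n ω} ≤
      μ {ω | ∃ n : ℕ, ENNReal.ofReal (T n) < rate P x α O h g n ω} :=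
  rate_coverage_ordering_general α x P hP O hO T Δ Ψ Δ' Ψ' hΨpos hΔ'pos hΔ hΨ μ μ' h g h' g' hhm hgm
    hh'm hg'm hindep hindep' hhd hgd hh'd hg'd
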